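/- The 2D Fourier transform of the function x ↦ j₀(k|x|) on ℝ² is [j₀(k|·|)]^(ξ) = (2π/(k√(k²−|ξ|²))) χ_{B(0,k)}(ξ), understood as the density of the pushforward of the surface measure of S(0,k) under vertical projection, scaled by 1/(4πk²) · (2π)². -/

import Mathlib

open MeasureTheory Complex Filter
open scoped Real RealInnerProductSpace

noncomputable section

abbrev R2 := EuclideanSpace ℝ (Fin 2)

/-- The zeroth spherical Bessel function `j₀(t) = sin t / t`, with `j₀(0) = 1`. -/
def j0 (t : ℝ) : ℝ := if t = 0 then 1 else Real.sin t / t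

/-!
The density `2π / (k √(k² - |ξ|²))` is radial, so rotating `x` onto the first axis leaves the
integral unchanged and makes the phase depend on `ξ₁` alone. Integrating out `ξ₂` over the chord
`|ξ₂| < c = √(k² - ξ₁²)` gives `∫ (√(c² - t²))⁻¹ dt = π` (substitute `t = c sin θ`) whatever `ξ₁`
is: the density projects to the constant `2π² / k` on `(-k, k)` (Archimedes' hat-box theorem).
Finally `∫₋ₖᵏ e^{iuρ} du = 2k j₀(kρ)`.
-/

open Set Function

lemma mul_cos_mul_inv_sqrt_sq_sub_mul_sin_sq {c θ : ℝ} (hc : 0 < c)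
    (hθ : θ ∈ Ioo (-(π / 2)) (π / 2)) :
    c * Real.cos θ * (√(c ^ 2 - (c * Real.sin θ) ^ 2))⁻¹ = 1 := by
  have hcos : 0 < c * Real.cos θ := mul_pos hc (Real.cos_pos_of_mem_Ioo hθ)
  have : c ^ 2 - (c * Real.sin θ) ^ 2 = (c * Real.cos θ) ^ 2 := by
    linear_combination (-c ^ 2) * Real.sin_sq_add_cos_sq θ
  rw [this, Real.sqrt_sq hcos.le, mul_inv_cancel₀ hcos.ne']

lemma integrableOn_inv_sqrt_sq_sub_sq {c : ℝ} (hc : 0 < c) :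
    IntegrableOn (fun u => (√(c ^ 2 - u ^ 2))⁻¹) (Icc (-c) c) := by
  have := integrableOn_Icc_deriv_smul_iff_of_deriv_nonneg (f := fun θ => c * Real.sin θ)
    (g := fun u => (√(c ^ 2 - u ^ 2))⁻¹)
    (f' := fun θ => c * Real.cos θ) (a := -(π / 2)) (b := π / 2) (by fun_prop)
    (fun θ _ => (Real.hasDerivAt_sin θ).const_mul c)
    (fun θ hθ => (mul_pos hc (Real.cos_pos_of_mem_Ioo hθ)).le) (by linarith [Real.pi_pos])
  simp only [Real.sin_neg, Real.sin_pi_div_two, mul_neg, mul_one] at this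
  rw [← this, integrableOn_Icc_iff_integrableOn_Ioo]
  exact (integrableOn_const measure_Ioo_lt_top.ne).congr_fun
    (fun θ hθ => (mul_cos_mul_inv_sqrt_sq_sub_mul_sin_sq hc hθ).symm) measurableSet_Ioo

lemma setIntegral_inv_sqrt_sq_sub_sq {c : ℝ} (hc : 0 < c) :
    ∫ u in Icc (-c) c, (√(c ^ 2 - u ^ 2))⁻¹ = π := by
  have := integral_Icc_deriv_smul_of_deriv_nonneg (f := fun θ => c * Real.sin θ)
    (g := fun u => (√(c ^ 2 - u ^ 2))⁻¹)
    (f' := fun θ => c * Real.cos θ) (a := -(π / 2)) (b := π / 2) (by fun_prop)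
    (fun θ _ => (Real.hasDerivAt_sin θ).const_mul c)
    (fun θ hθ => (mul_pos hc (Real.cos_pos_of_mem_Ioo hθ)).le) (by linarith [Real.pi_pos])
  simp only [Real.sin_neg, Real.sin_pi_div_two, mul_neg, mul_one, smul_eq_mul] at this
  rw [← this, integral_Icc_eq_integral_Ioo, setIntegral_congr_fun measurableSet_Ioo
    (fun θ hθ => mul_cos_mul_inv_sqrt_sq_sub_mul_sin_sq hc hθ)]
  simp [Real.volume_real_Ioo, Real.pi_pos.le]

-- `Real.sqrt` of a negative number and `0⁻¹` are both `0`, so no indicator is needed.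
lemma support_inv_sqrt_sub_sq (r : ℝ) :
    support (fun t : ℝ => (√(r - t ^ 2))⁻¹) = Ioo (-√r) (√r) := by
  ext t
  simp [Real.sqrt_ne_zero', Real.sq_lt]

lemma inv_sqrt_sub_sq_eq_zero {r : ℝ} (hr : r ≤ 0) : (fun t : ℝ => (√(r - t ^ 2))⁻¹) = 0 :=
  support_eq_empty_iff.1 <| by
    rw [support_inv_sqrt_sub_sq, Real.sqrt_eq_zero'.2 hr, neg_zero, Ioo_self]

lemma integrable_inv_sqrt_sub_sq (r : ℝ) : Integrable (fun t : ℝ => (√(r - t ^ 2))⁻¹) := by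
  rcases le_or_gt r 0 with hr | hr
  · simp [inv_sqrt_sub_sq_eq_zero hr]
  · have hsupp := (support_inv_sqrt_sub_sq r).trans_subset Ioo_subset_Icc_self
    rw [← integrableOn_iff_integrable_of_support_subset hsupp]
    simpa [Real.sq_sqrt hr.le] using integrableOn_inv_sqrt_sq_sub_sq (Real.sqrt_pos.2 hr)

lemma integral_inv_sqrt_sub_sq (r : ℝ) : ∫ t, (√(r - t ^ 2))⁻¹ = if 0 < r then π else 0 := by
  rcases le_or_gt r 0 with hr | hr
  · simp [inv_sqrt_sub_sq_eq_zero hr, hr.not_gt]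
  · have hsupp := (support_inv_sqrt_sub_sq r).trans_subset Ioo_subset_Icc_self
    rw [if_pos hr, ← setIntegral_eq_integral_of_forall_compl_eq_zero
      (fun t ht => notMem_support.1 (fun h => ht (hsupp h)))]
    simpa [Real.sq_sqrt hr.le] using setIntegral_inv_sqrt_sq_sub_sq (Real.sqrt_pos.2 hr)

lemma integral_inv_sqrt_sub_sq_sub_sq (r u : ℝ) :
    ∫ t, (√(r - u ^ 2 - t ^ 2))⁻¹ = (Ioo (-√r) (√r)).indicator (fun _ => π) u := by
  simp [integral_inv_sqrt_sub_sq, indicator, Real.sq_lt]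

lemma integrable_inv_sqrt_sub_sq_sub_sq (r : ℝ) :
    Integrable (fun p : ℝ × ℝ => (√(r - p.1 ^ 2 - p.2 ^ 2))⁻¹) := by
  rw [Measure.volume_eq_prod, integrable_prod_iff (by fun_prop)]
  refine ⟨.of_forall fun u => integrable_inv_sqrt_sub_sq (r - u ^ 2), ?_⟩
  simp only [norm_inv, Real.norm_of_nonneg (Real.sqrt_nonneg _), integral_inv_sqrt_sub_sq_sub_sq]
  exact (integrableOn_const measure_Ioo_lt_top.ne).integrable_indicator measurableSet_Ioo

lemma integral_inv_sqrt_sub_sq_sub_sq_smul {E : Type*} [NormedAddCommGroup E] [NormedSpace ℝ E]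
    [CompleteSpace E] (r C : ℝ) {φ : ℝ → E} (hφ : AEStronglyMeasurable φ)
    (hC : ∀ u, ‖φ u‖ ≤ C) :
    ∫ p : ℝ × ℝ, (√(r - p.1 ^ 2 - p.2 ^ 2))⁻¹ • φ p.1 = π • ∫ u in -√r..√r, φ u := by
  have hint : Integrable (fun p : ℝ × ℝ => (√(r - p.1 ^ 2 - p.2 ^ 2))⁻¹ • φ p.1) :=
    (integrable_inv_sqrt_sub_sq_sub_sq r).smul_bdd C (hφ.comp_fst (ν := volume))
      (.of_forall fun p => hC p.1)
  rw [Measure.volume_eq_prod] at hint ⊢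
  rw [integral_prod _ hint]
  simp only [integral_smul_const, integral_inv_sqrt_sub_sq_sub_sq, ← indicator_smul_apply_left]
  rw [integral_indicator measurableSet_Ioo, integral_smul,
    intervalIntegral.integral_of_le (neg_le_self (Real.sqrt_nonneg r)),
    integral_Ioc_eq_integral_Ioo]

lemma integral_norm_inner_eq_of_norm_eq {E F : Type*} [NormedAddCommGroup E]
    [InnerProductSpace ℝ E] [FiniteDimensional ℝ E] [MeasurableSpace E] [BorelSpace E]
    [NormedAddCommGroup F] [NormedSpace ℝ F] (f : ℝ → ℝ → F) {x y : E} (h : ‖x‖ = ‖y‖) :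
    ∫ ξ, f ‖ξ‖ ⟪ξ, x⟫ = ∫ ξ, f ‖ξ‖ ⟪ξ, y⟫ := by
  set T := Submodule.reflection (ℝ ∙ (y - x))ᗮ
  have hTy : T y = x := Submodule.reflection_sub h.symm
  rw [← T.measurePreserving.integral_comp T.toHomeomorph.measurableEmbedding]
  congr 1 with ξ
  rw [LinearIsometryEquiv.norm_map, ← hTy, LinearIsometryEquiv.inner_map_map]

lemma integral_euclideanSpace_fin_two {F : Type*} [NormedAddCommGroup F] [NormedSpace ℝ F]
    (g : EuclideanSpace ℝ (Fin 2) → F) : ∫ ξ, g ξ = ∫ p : ℝ × ℝ, g !₂[p.1, p.2] := by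
  have : MeasurePreserving
      (MeasurableEquiv.finTwoArrow.symm.trans (MeasurableEquiv.toLp 2 (Fin 2 → ℝ))) :=
    (EuclideanSpace.volume_preserving_symm_measurableEquiv_toLp (Fin 2)).symm.comp
      (volume_preserving_finTwoArrow ℝ).symm
  exact (this.integral_comp' g).symm

lemma support_sqrt_sq_sub_norm_sq_subset {E : Type*} [SeminormedAddCommGroup E] {k : ℝ}
    (hk : 0 ≤ k) : support (fun ξ : E => √(k ^ 2 - ‖ξ‖ ^ 2)) ⊆ Metric.ball 0 k := by
  intro ξ hξ
  have : 0 < k ^ 2 - ‖ξ‖ ^ 2 := Real.sqrt_ne_zero'.1 hξ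
  exact mem_ball_zero_iff.2 (lt_of_pow_lt_pow_left₀ 2 hk (by linarith))

lemma two_mul_mul_j0_mul {a : ℝ} (ha : a ≠ 0) (k : ℝ) :
    2 * k * j0 (k * a) = 2 * Real.sin (k * a) / a := by
  unfold j0
  split_ifs with h
  · obtain rfl : k = 0 := by simpa [ha] using h
    simp
  · have hk : k ≠ 0 := left_ne_zero_of_mul h
    field_simp

lemma integral_exp_I_mul_eq_two_mul_j0 (a k : ℝ) :
    ∫ u in -k..k, exp (I * (u * a)) = ((2 * k * j0 (k * a) : ℝ) : ℂ) := by
  rcases eq_or_ne a 0 with rfl | ha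
  · simp [j0]
    ring
  have hIa : I * a ≠ 0 := by simp [ha]
  have hlin : ∀ u : ℝ, I * (u * a) = I * a * u := fun u => by ring
  simp_rw [hlin]
  rw [integral_exp_mul_complex hIa, two_mul_mul_j0_mul ha]
  have hplus : I * a * k = (k * a : ℝ) * I := by push_cast; ring
  have hminus : I * a * (-k : ℝ) = (-(k * a) : ℝ) * I := by push_cast; ring
  rw [hplus, hminus, exp_mul_I, exp_mul_I, ← ofReal_cos, ← ofReal_sin, ← ofReal_cos,
    ← ofReal_sin, Real.cos_neg, Real.sin_neg]
  push_cast
  field_simp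
  ring

lemma integral_density_mul_exp_inner_single {k : ℝ} (hk : 0 ≤ k) (a : ℝ) :
    ∫ ξ : EuclideanSpace ℝ (Fin 2), ((2 * π / (k * √(k ^ 2 - ‖ξ‖ ^ 2)) : ℝ) : ℂ) *
      exp (I * ⟪ξ, EuclideanSpace.single 0 a⟫) =
      ((2 * π / k : ℝ) : ℂ) * (π • ∫ u in -k..k, exp (I * (u * a))) := by
  have hfubini := integral_inv_sqrt_sub_sq_sub_sq_smul (k ^ 2) 1
    (φ := fun u : ℝ => exp (I * (u * a))) (by fun_prop) (fun u => by simp [norm_exp])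
  rw [Real.sqrt_sq hk] at hfubini
  rw [integral_euclideanSpace_fin_two, ← hfubini, ← integral_const_mul]
  congr 1 with p
  rw [EuclideanSpace.real_norm_sq_eq, EuclideanSpace.inner_single_right, real_smul]
  simp only [Fin.sum_univ_two, Matrix.cons_val_zero, Matrix.cons_val_one, conj_trivial,
    ← sub_sub, mul_inv, div_eq_mul_inv]
  push_cast
  ring_nf

/-- The 2D Fourier transform of `x ↦ j₀(k|x|)` is `(2π/(k√(k²−|ξ|²))) χ_{B(0,k)}(ξ)`,
in the sense that `j₀(k|·|)` is the inverse Fourier transform of this density: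
`j₀(k|x|) = (2π)⁻² ∫_{B(0,k)} (2π/(k√(k²−|ξ|²))) e^{i ξ·x} dξ`. -/
theorem stmt17 (k : ℝ) (hk : 0 < k) (x : R2) :
    (j0 (k * ‖x‖) : ℂ) =
      ((2 * π : ℝ) : ℂ)⁻¹ ^ 2 *
        ∫ ξ : R2,
          Set.indicator (Metric.ball (0 : R2) k)
              (fun ξ => ((2 * π / (k * Real.sqrt (k ^ 2 - ‖ξ‖ ^ 2)) : ℝ) : ℂ)) ξ *
            Complex.exp (Complex.I * (⟪ξ, x⟫ : ℝ)) := by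
  have hsupp : (Metric.ball (0 : R2) k).indicator
      (fun ξ => ((2 * π / (k * √(k ^ 2 - ‖ξ‖ ^ 2)) : ℝ) : ℂ)) =
      fun ξ => ((2 * π / (k * √(k ^ 2 - ‖ξ‖ ^ 2)) : ℝ) : ℂ) :=
    indicator_eq_self.2 fun ξ hξ =>
      support_sqrt_sq_sub_norm_sq_subset hk.le fun h => hξ (by simp [h])
  have hrot := integral_norm_inner_eq_of_norm_eq
    (fun r s => ((2 * π / (k * √(k ^ 2 - r ^ 2)) : ℝ) : ℂ) * exp (I * s))
    (x := x) (y := EuclideanSpace.single 0 ‖x‖) (by simp)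
  have hk' : (k : ℂ) ≠ 0 := ofReal_ne_zero.2 hk.ne'
  simp only [hsupp]
  rw [hrot, integral_density_mul_exp_inner_single hk.le, integral_exp_I_mul_eq_two_mul_j0,
    real_smul]
  push_cast
  field_simp
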